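/- arXiv:2509.16575 — 3 statements merged into one kernel-verified Lean document; each statement's English description precedes it below -/
import Mathlib

section
/- Let $(X,\mu)$ be a measure space, $\gamma : X \to \mathbb{R}$ measurable with $\gamma(x) > 0$ for all $x$, and $s > 0$. Let $H$ be a complex Hilbert space, let $U : X \to B(H)$ assign to each $\xi \in X$ a bounded linear operator $U_\xi$ with $\|U_\xi \eta\| = \|\eta\|$ for all $\eta \in H$, and let $g : X \to \mathbb{C}$ be measurable with $\xi \mapsto (1+\gamma(\xi)^2)^{s/2} g(\xi)$ in $L^2(X,\mu)$ and $\xi \mapsto (1+\gamma(\xi)^2)^{-s/2}$ in $L^2(X,\mu)$. Suppose $T : H \to H$ is a bounded linear operator such that for every $\eta \in H$ the map $\xi \mapsto g(\xi)\, U_\xi \eta$ is Bochner integrable and $T\eta = \int_X g(\xi)\, U_\xi \eta \, d\mu(\xi)$. Then the operator norm of $T$ satisfies $\|T\|_{op} \leq \big\|(1+\gamma(\cdot)^2)^{-s/2}\big\|_{L^2(\mu)} \cdot \big\|(1+\gamma(\cdot)^2)^{s/2} g\big\|_{L^2(\mu)}$. -/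
/-!
Since every `U ξ` is an isometry, `‖T η‖ ≤ (∫ ‖g‖) ‖η‖`. Writing `‖g‖` as the product of the
weight `(1 + γ²)^{-s/2}` with `‖(1 + γ²)^{s/2} g‖`, the Cauchy–Schwarz inequality bounds `∫ ‖g‖` by
the product of the two `L²` norms.
-/

open MeasureTheory

section

variable {X : Type*} [MeasurableSpace X] {μ : Measure X}

theorem integral_mul_le_L2_mul_L2_of_nonneg {f h : X → ℝ} (hf_nonneg : 0 ≤ᵐ[μ] f)
    (hh_nonneg : 0 ≤ᵐ[μ] h) (hf : MemLp f 2 μ) (hh : MemLp h 2 μ) :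
    ∫ ξ, f ξ * h ξ ∂μ ≤ (∫ ξ, f ξ ^ 2 ∂μ) ^ (1 / 2 : ℝ) * (∫ ξ, h ξ ^ 2 ∂μ) ^ (1 / 2 : ℝ) := by
  have key := integral_mul_le_Lp_mul_Lq_of_nonneg Real.HolderConjugate.two_two hf_nonneg hh_nonneg
    (by simpa using hf) (by simpa using hh)
  simpa only [Real.rpow_two] using key

theorem integral_norm_le_L2_mul_L2_of_mul_eq_one {𝕜 : Type*} [RCLike 𝕜] {v w : X → ℝ}
    {g : X → 𝕜} (hvw : ∀ ξ, v ξ * w ξ = 1) (hv_nonneg : ∀ ξ, 0 ≤ v ξ) (hv : MemLp v 2 μ)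
    (hwg : MemLp (fun ξ => (w ξ : 𝕜) * g ξ) 2 μ) :
    ∫ ξ, ‖g ξ‖ ∂μ ≤
      (∫ ξ, v ξ ^ 2 ∂μ) ^ (1 / 2 : ℝ) * (∫ ξ, ‖(w ξ : 𝕜) * g ξ‖ ^ 2 ∂μ) ^ (1 / 2 : ℝ) := by
  have hnorm : ∀ ξ, ‖g ξ‖ = v ξ * ‖(w ξ : 𝕜) * g ξ‖ := fun ξ => by
    have hv_pos : 0 < v ξ := (hv_nonneg ξ).lt_of_ne fun h => by simpa [← h] using hvw ξ
    have hw_nonneg : 0 ≤ w ξ := nonneg_of_mul_nonneg_right (hvw ξ ▸ zero_le_one) hv_pos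
    rw [norm_mul, RCLike.norm_ofReal, abs_of_nonneg hw_nonneg, ← mul_assoc, hvw, one_mul]
  simp_rw [hnorm]
  exact integral_mul_le_L2_mul_L2_of_nonneg (.of_forall hv_nonneg)
    (.of_forall fun _ => norm_nonneg _) hv hwg.norm

theorem ContinuousLinearMap.opNorm_le_integral_norm_of_apply_eq_integral
    {𝕜 E F : Type*} [NontriviallyNormedField 𝕜] [NormedAddCommGroup E] [NormedSpace 𝕜 E]
    [NormedAddCommGroup F] [NormedSpace 𝕜 F] [NormedSpace ℝ F]
    {U : X → E →L[𝕜] F} (hU : ∀ ξ η, ‖U ξ η‖ = ‖η‖) {g : X → 𝕜} {T : E →L[𝕜] F}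
    (hT : ∀ η, T η = ∫ ξ, g ξ • U ξ η ∂μ) :
    ‖T‖ ≤ ∫ ξ, ‖g ξ‖ ∂μ := by
  refine T.opNorm_le_bound (integral_nonneg fun _ => norm_nonneg _) fun η => ?_
  calc ‖T η‖ ≤ ∫ ξ, ‖g ξ • U ξ η‖ ∂μ := hT η ▸ norm_integral_le_integral_norm _
    _ = (∫ ξ, ‖g ξ‖ ∂μ) * ‖η‖ := by
      simp_rw [norm_smul, hU]
      exact integral_mul_const _ _

end

theorem quantum_sobolev_embeds_into_bounded_operators_general
    {X : Type*} [MeasurableSpace X] (μ : Measure X)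
    (γ : X → ℝ)
    (s : ℝ)
    {H : Type*} [NormedAddCommGroup H] [InnerProductSpace ℂ H]
    (U : X → H →L[ℂ] H) (hU : ∀ ξ : X, ∀ η : H, ‖U ξ η‖ = ‖η‖)
    (g : X → ℂ)
    (hg : MemLp (fun ξ => (((1 + γ ξ ^ 2) ^ (s / 2) : ℝ) : ℂ) * g ξ) 2 μ)
    (hw : MemLp (fun ξ => (1 + γ ξ ^ 2) ^ (-(s / 2))) 2 μ)
    (T : H →L[ℂ] H)
    (hT : ∀ η : H, T η = ∫ ξ, g ξ • U ξ η ∂μ) :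
    ‖T‖ ≤ (∫ ξ, ((1 + γ ξ ^ 2) ^ (-(s / 2))) ^ 2 ∂μ) ^ (1/2 : ℝ) *
        (∫ ξ, ‖(((1 + γ ξ ^ 2) ^ (s / 2) : ℝ) : ℂ) * g ξ‖ ^ 2 ∂μ) ^ (1/2 : ℝ) := by
  have hweight : ∀ ξ, (1 + γ ξ ^ 2) ^ (-(s / 2)) * (1 + γ ξ ^ 2) ^ (s / 2) = 1 := fun ξ => by
    rw [Real.rpow_neg (by positivity), inv_mul_cancel₀ (by positivity)]
  exact (T.opNorm_le_integral_norm_of_apply_eq_integral hU hT).trans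
    (integral_norm_le_L2_mul_L2_of_mul_eq_one hweight (fun _ => by positivity) hw hg)

/-- If `T η = ∫ g(ξ) U_ξ η dμ(ξ)` with each `U_ξ` norm-preserving,
`(1+γ²)^{s/2} g ∈ L²` and `(1+γ²)^{-s/2} ∈ L²`, then
`‖T‖_op ≤ ‖(1+γ²)^{-s/2}‖_{L²} ⬝ ‖(1+γ²)^{s/2} g‖_{L²}`. -/
theorem quantum_sobolev_embeds_into_bounded_operators
    {X : Type*} [MeasurableSpace X] (μ : Measure X)
    (γ : X → ℝ) (hγ_meas : Measurable γ) (hγ_pos : ∀ x, 0 < γ x)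
    (s : ℝ) (hs : 0 < s)
    {H : Type*} [NormedAddCommGroup H] [InnerProductSpace ℂ H] [CompleteSpace H]
    (U : X → H →L[ℂ] H) (hU : ∀ ξ : X, ∀ η : H, ‖U ξ η‖ = ‖η‖)
    (g : X → ℂ) (hg_meas : Measurable g)
    (hg : MemLp (fun ξ => (((1 + γ ξ ^ 2) ^ (s / 2) : ℝ) : ℂ) * g ξ) 2 μ)
    (hw : MemLp (fun ξ => (1 + γ ξ ^ 2) ^ (-(s / 2))) 2 μ)
    (T : H →L[ℂ] H)
    (hT_int : ∀ η : H, Integrable (fun ξ => g ξ • U ξ η) μ)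
    (hT : ∀ η : H, T η = ∫ ξ, g ξ • U ξ η ∂μ) :
    ‖T‖ ≤ (∫ ξ, ((1 + γ ξ ^ 2) ^ (-(s / 2))) ^ 2 ∂μ) ^ (1/2 : ℝ) *
        (∫ ξ, ‖(((1 + γ ξ ^ 2) ^ (s / 2) : ℝ) : ℂ) * g ξ‖ ^ 2 ∂μ) ^ (1/2 : ℝ) :=
  quantum_sobolev_embeds_into_bounded_operators_general μ γ s U hU g hg hw T hT
end

section
/- Let $(X,\mu)$ be a measure space, $\gamma : X \to \mathbb{R}$ measurable with $\gamma(x) > 0$ for all $x$, and let $\alpha > s > 0$ be real numbers. Set $p = \frac{2\alpha}{\alpha+s}$, so $1 < p < 2$. Let $f : X \to \mathbb{C}$ be measurable. If the function $\xi \mapsto \frac{1}{1+\gamma(\xi)^2}$ belongs to $L^\alpha(X,\mu)$ and $\xi \mapsto (1+\gamma(\xi)^2)^{s/2} f(\xi)$ belongs to $L^2(X,\mu)$, then $f \in L^p(X,\mu)$ and $\|f\|_{L^p(\mu)} \leq \big\|(1+\gamma(\cdot)^2)^{s/2} f\big\|_{L^2(\mu)} \cdot \big\|\tfrac{1}{1+\gamma(\cdot)^2}\big\|_{L^\alpha(\mu)}^{s/2}$.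 -/
/-! Write `f = (1 + γ²)^(-s/2) • ((1 + γ²)^(s/2) • f)` and apply Hölder's inequality with
exponents `2α/s` and `2`, which works because `s/(2α) + 1/2 = 1/p`. The `L^(2α/s)`-norm of the
first factor is the `L^α`-norm of `1/(1 + γ²)` raised to the power `s/2`. -/

open MeasureTheory
open scoped ENNReal

lemma two_mul_div_add_mem_Ioo {s α : ℝ} (hs : 0 < s) (hα : s < α) :
    2 * α / (α + s) ∈ Set.Ioo 1 2 := by
  have hαs : 0 < α + s := by linarith
  constructor
  · rw [lt_div_iff₀ hαs]; linarith
  · rw [div_lt_iff₀ hαs]; linarith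

lemma Real.holderTriple_two_mul_div {s α : ℝ} (hs : 0 < s) (hα : 0 < α) :
    (2 * α / s).HolderTriple 2 (2 * α / (α + s)) where
  inv_add_inv_eq_inv := by field_simp; ring
  left_pos := by positivity
  right_pos := two_pos

lemma norm_rpow_half_smul_sq {E : Type*} [NormedAddCommGroup E] [NormedSpace ℝ E] {ρ : ℝ}
    (hρ : 0 ≤ ρ) (s : ℝ) (z : E) : ‖ρ ^ (s / 2) • z‖ ^ 2 = ρ ^ s * ‖z‖ ^ 2 := by
  rw [norm_smul, mul_pow, Real.norm_of_nonneg (Real.rpow_nonneg hρ _),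
    ← Real.rpow_mul_natCast hρ]
  norm_num

lemma inv_rpow_smul_rpow_smul {X E : Type*} [NormedAddCommGroup E] [NormedSpace ℝ E]
    {ρ : X → ℝ} (hρ : ∀ x, 0 < ρ x) (t : ℝ) (f : X → E) :
    (fun x => (ρ x)⁻¹ ^ t) • (fun x => ρ x ^ t • f x) = f := by
  funext x
  rw [Pi.smul_apply', smul_smul, Real.inv_rpow (hρ x).le,
    inv_mul_cancel₀ (Real.rpow_pos_of_pos (hρ x) t).ne', one_smul]

namespace MeasureTheory

variable {X E : Type*} [MeasurableSpace X] {μ : Measure X} [NormedAddCommGroup E]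

lemma MemLp.eLpNorm_ofReal_eq_integral {f : X → E} {p : ℝ} (hp : 0 < p)
    (hf : MemLp f (ENNReal.ofReal p) μ) :
    eLpNorm f (ENNReal.ofReal p) μ = ENNReal.ofReal ((∫ x, ‖f x‖ ^ p ∂μ) ^ p⁻¹) := by
  rw [hf.eLpNorm_eq_integral_rpow_norm (by simpa using hp) ENNReal.ofReal_ne_top,
    ENNReal.toReal_ofReal hp.le]

lemma eLpNorm_rpow_of_nonneg {w : X → ℝ} (hw : 0 ≤ w) {t : ℝ} (ht : 0 < t) (q : ℝ≥0∞) :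
    eLpNorm (fun x => w x ^ t) q μ = eLpNorm w (q * ENNReal.ofReal t) μ ^ t := by
  convert eLpNorm_norm_rpow (μ := μ) (p := q) w ht using 4 with x
  exact (Real.norm_of_nonneg (hw x)).symm

lemma MemLp.rpow_of_nonneg {w : X → ℝ} (hw0 : 0 ≤ w) {t : ℝ} (ht : 0 < t) {q : ℝ≥0∞}
    (hw : MemLp w (q * ENNReal.ofReal t) μ) : MemLp (fun x => w x ^ t) q μ :=
  ⟨(Real.continuous_rpow_const ht.le).comp_aestronglyMeasurable hw.1, by
    rw [eLpNorm_rpow_of_nonneg hw0 ht]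
    exact ENNReal.rpow_lt_top_of_nonneg ht.le hw.2.ne⟩

variable [NormedSpace ℝ E] {ρ : X → ℝ}

lemma MemLp.of_inv_rpow_of_rpow_smul {t : ℝ} {f : X → E} {p q r : ℝ≥0∞} [p.HolderTriple q r]
    (hρ : ∀ x, 0 < ρ x)
    (hw : MemLp (fun x => (ρ x)⁻¹ ^ t) p μ) (hg : MemLp (fun x => ρ x ^ t • f x) q μ) :
    MemLp f r μ :=
  inv_rpow_smul_rpow_smul hρ t f ▸ hg.smul hw

lemma eLpNorm_le_eLpNorm_inv_rpow_mul_eLpNorm_rpow_smul {t : ℝ} {f : X → E} {p q r : ℝ≥0∞}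
    [p.HolderTriple q r] (hρ : ∀ x, 0 < ρ x)
    (hw : AEStronglyMeasurable (fun x => (ρ x)⁻¹ ^ t) μ)
    (hg : AEStronglyMeasurable (fun x => ρ x ^ t • f x) μ) :
    eLpNorm f r μ ≤ eLpNorm (fun x => (ρ x)⁻¹ ^ t) p μ * eLpNorm (fun x => ρ x ^ t • f x) q μ := by
  conv_lhs => rw [← inv_rpow_smul_rpow_smul hρ t f]
  exact eLpNorm_smul_le_mul_eLpNorm hg hw

end MeasureTheory

theorem weighted_holder_Lp_estimate_general
    {X : Type*} [MeasurableSpace X] (μ : Measure X)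
    (γ : X → ℝ)
    (s α : ℝ) (hs : 0 < s) (hα : s < α)
    (p : ℝ) (hp : p = 2 * α / (α + s))
    (f : X → ℂ)
    (hw : MemLp (fun ξ => 1 / (1 + γ ξ ^ 2)) (ENNReal.ofReal α) μ)
    (hf : MemLp (fun ξ => (((1 + γ ξ ^ 2) ^ (s / 2) : ℝ) : ℂ) * f ξ) 2 μ) :
    1 < p ∧ p < 2 ∧
    MemLp f (ENNReal.ofReal p) μ ∧
    (∫ ξ, ‖f ξ‖ ^ p ∂μ) ^ (1 / p) ≤
      (∫ ξ, (1 + γ ξ ^ 2) ^ s * ‖f ξ‖ ^ 2 ∂μ) ^ (1/2 : ℝ) *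
        ((∫ ξ, (1 / (1 + γ ξ ^ 2)) ^ α ∂μ) ^ (1 / α)) ^ (s / 2) := by
  have hα0 : 0 < α := hs.trans hα
  obtain ⟨hp1, hp2⟩ : p ∈ Set.Ioo 1 2 := hp ▸ two_mul_div_add_mem_Ioo hs hα
  have hρ : ∀ ξ, 0 < 1 + γ ξ ^ 2 := fun ξ => by positivity
  have hholder : ENNReal.HolderTriple (ENNReal.ofReal (2 * α / s)) 2 (ENNReal.ofReal p) := by
    simpa [hp] using (Real.holderTriple_two_mul_div hs hα0).ennrealOfReal
  have hexp : ENNReal.ofReal (2 * α / s) * ENNReal.ofReal (s / 2) = ENNReal.ofReal α := by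
    rw [← ENNReal.ofReal_mul (by positivity)]
    congr 1
    field_simp
  simp only [one_div] at hw ⊢
  simp only [← Complex.real_smul] at hf
  have hφ : MemLp (fun ξ => (1 + γ ξ ^ 2)⁻¹ ^ (s / 2)) (ENNReal.ofReal (2 * α / s)) μ :=
    .rpow_of_nonneg (fun ξ => (inv_pos.2 (hρ ξ)).le) (by positivity) (hexp ▸ hw)
  have hfp : MemLp f (ENNReal.ofReal p) μ := hφ.of_inv_rpow_of_rpow_smul hρ hf
  refine ⟨hp1, hp2, hfp, ?_⟩
  have key := eLpNorm_le_eLpNorm_inv_rpow_mul_eLpNorm_rpow_smul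
    (p := ENNReal.ofReal (2 * α / s)) (q := 2) (r := ENNReal.ofReal p) hρ hφ.1 hf.1
  rw [hfp.eLpNorm_ofReal_eq_integral (by linarith),
    eLpNorm_rpow_of_nonneg (fun ξ => (inv_pos.2 (hρ ξ)).le) (by positivity), hexp,
    hw.eLpNorm_ofReal_eq_integral hα0,
    ENNReal.ofReal_rpow_of_nonneg (by positivity) (by positivity),
    hf.eLpNorm_eq_integral_rpow_norm two_ne_zero ENNReal.ofNat_ne_top, ENNReal.toReal_ofNat] at key
  simp_rw [Real.rpow_two, norm_rpow_half_smul_sq (hρ _).le,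
    Real.norm_of_nonneg (inv_pos.2 (hρ _)).le] at key
  rwa [mul_comm, ← ENNReal.ofReal_mul (by positivity),
    ENNReal.ofReal_le_ofReal_iff (by positivity)] at key

/-- Hölder estimate: for `α > s > 0` and `p = 2α/(α+s)`, if
`1/(1+γ²) ∈ L^α` and `(1+γ²)^{s/2} f ∈ L²`, then `1 < p < 2`, `f ∈ L^p` and
`‖f‖_{L^p} ≤ ‖(1+γ²)^{s/2} f‖_{L²} ⬝ ‖1/(1+γ²)‖_{L^α}^{s/2}`. -/
theorem weighted_holder_Lp_estimate
    {X : Type*} [MeasurableSpace X] (μ : Measure X)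
    (γ : X → ℝ) (hγ_meas : Measurable γ) (hγ_pos : ∀ x, 0 < γ x)
    (s α : ℝ) (hs : 0 < s) (hα : s < α)
    (p : ℝ) (hp : p = 2 * α / (α + s))
    (f : X → ℂ) (hf_meas : Measurable f)
    (hw : MemLp (fun ξ => 1 / (1 + γ ξ ^ 2)) (ENNReal.ofReal α) μ)
    (hf : MemLp (fun ξ => (((1 + γ ξ ^ 2) ^ (s / 2) : ℝ) : ℂ) * f ξ) 2 μ) :
    1 < p ∧ p < 2 ∧
    MemLp f (ENNReal.ofReal p) μ ∧
    (∫ ξ, ‖f ξ‖ ^ p ∂μ) ^ (1 / p) ≤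
      (∫ ξ, (1 + γ ξ ^ 2) ^ s * ‖f ξ‖ ^ 2 ∂μ) ^ (1/2 : ℝ) *
        ((∫ ξ, (1 / (1 + γ ξ ^ 2)) ^ α ∂μ) ^ (1 / α)) ^ (s / 2) :=
  weighted_holder_Lp_estimate_general μ γ s α hs hα p hp f hw hf
end

section
/- Let $(X,\mu)$ be a measure space, $\gamma : X \to \mathbb{R}$ measurable with $\gamma(x) > 0$ for all $x$, $c > 0$ a real constant, $E$ a complex Hilbert space, and $\mathcal{F} : E \to L^2(X,\mu;\mathbb{C})$ a linear isometric equivalence. Define the weight $w_c(\xi) = 1 + \gamma(\xi)^2 e^{c\gamma(\xi)^2}$, the domain $D(\mathscr{L}_c) = \{T \in E : \xi \mapsto w_c(\xi)\,\mathcal{F}T(\xi) \in L^2(X,\mu)\}$, and for $T \in D(\mathscr{L}_c)$ set $\mathscr{L}_c T = -\,\mathcal{F}^{-1}\big(w_c\,\mathcal{F}T\big)$. Then for every $S \in E$ there exists a unique $T_0 \in D(\mathscr{L}_c)$ with $\mathscr{L}_c T_0 = S$, and this solution satisfies $\big\|w_c\,\mathcal{F}T_0\big\|_{L^2(\mu)}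 = \|S\|_E$. -/
open MeasureTheory
open scoped ENNReal

/-! Multiplication by a weight `w` with `‖w‖ ≥ δ > 0` is injective on `Lp` and has the bounded
inverse `f ↦ w⁻¹ f`, so the equation `w · 𝓕T = -𝓕S` has exactly one solution `𝓕T = -w⁻¹ 𝓕S`.
The norm identity is Plancherel: `‖w 𝓕T₀‖₂ = ‖𝓕S‖₂ = ‖S‖`. -/

theorem one_le_one_add_sq_mul_exp (t c : ℝ) : 1 ≤ 1 + t ^ 2 * Real.exp (c * t ^ 2) := by
  have := mul_nonneg (sq_nonneg t) (Real.exp_pos (c * t ^ 2)).le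
  linarith

namespace MeasureTheory.Lp

variable {X 𝕜 : Type*} [MeasurableSpace X] {μ : Measure X} [NormedField 𝕜] {p : ℝ≥0∞}

theorem eq_of_mul_ae_eq_mul {w : X → 𝕜} (hw : ∀ᵐ ξ ∂μ, w ξ ≠ 0) {u v : Lp 𝕜 p μ}
    (huv : (fun ξ => w ξ * u ξ) =ᵐ[μ] fun ξ => w ξ * v ξ) : u = v :=
  Lp.ext <| by
    filter_upwards [hw, huv] with ξ hwξ hξ using mul_left_cancel₀ hwξ hξ

theorem existsUnique_mul_ae_eq {w : X → 𝕜} (hw_meas : AEStronglyMeasurable w μ) {δ : ℝ}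
    (hδ : 0 < δ) (hw : ∀ᵐ ξ ∂μ, δ ≤ ‖w ξ‖) (f : Lp 𝕜 p μ) :
    ∃! u : Lp 𝕜 p μ, (fun ξ => w ξ * u ξ) =ᵐ[μ] f := by
  have hw0 : ∀ᵐ ξ ∂μ, w ξ ≠ 0 := by
    filter_upwards [hw] with ξ hξ
    exact norm_pos_iff.mp (hδ.trans_le hξ)
  have hmem : MemLp (fun ξ => (w ξ)⁻¹ * f ξ) p μ := by
    refine (Lp.memLp f).of_le_mul (c := δ⁻¹)
      (hw_meas.fun_inv₀.mul (Lp.aestronglyMeasurable f)) ?_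
    filter_upwards [hw] with ξ hξ
    rw [norm_mul, norm_inv]
    gcongr
  have hsol : (fun ξ => w ξ * hmem.toLp _ ξ) =ᵐ[μ] f := by
    filter_upwards [hw0, hmem.coeFn_toLp] with ξ hwξ hξ
    rw [hξ, mul_inv_cancel_left₀ hwξ]
  exact ⟨hmem.toLp _, hsol, fun v hv => eq_of_mul_ae_eq_mul hw0 (hv.trans hsol.symm)⟩

theorem norm_eq_integral_norm_sq_rpow {E : Type*} [NormedAddCommGroup E] (f : Lp E 2 μ) :
    ‖f‖ = (∫ ξ, ‖f ξ‖ ^ 2 ∂μ) ^ (1 / 2 : ℝ) := by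
  rw [Lp.norm_def, (Lp.memLp f).eLpNorm_eq_integral_rpow_norm two_ne_zero ENNReal.ofNat_ne_top,
    ENNReal.toReal_ofReal (by positivity)]
  norm_num

end MeasureTheory.Lp

theorem quantum_bosonic_string_equation_unique_solution_general
    {X : Type*} [MeasurableSpace X] (μ : Measure X)
    (γ : X → ℝ) (hγ_meas : Measurable γ)
    (c : ℝ)
    {E : Type*} [NormedAddCommGroup E] [InnerProductSpace ℂ E]
    (F : E ≃ₗᵢ[ℂ] Lp ℂ 2 μ)
    (S : E) :
    (∃! T₀ : E,
      MemLp (fun ξ => ((1 + γ ξ ^ 2 * Real.exp (c * γ ξ ^ 2) : ℝ) : ℂ) *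
        (F T₀ : Lp ℂ 2 μ) ξ) 2 μ ∧
      (fun ξ => -(((1 + γ ξ ^ 2 * Real.exp (c * γ ξ ^ 2) : ℝ) : ℂ) *
        (F T₀ : Lp ℂ 2 μ) ξ)) =ᵐ[μ] (F S : Lp ℂ 2 μ)) ∧
    (∀ T₀ : E,
      MemLp (fun ξ => ((1 + γ ξ ^ 2 * Real.exp (c * γ ξ ^ 2) : ℝ) : ℂ) *
        (F T₀ : Lp ℂ 2 μ) ξ) 2 μ →
      (fun ξ => -(((1 + γ ξ ^ 2 * Real.exp (c * γ ξ ^ 2) : ℝ) : ℂ) *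
        (F T₀ : Lp ℂ 2 μ) ξ)) =ᵐ[μ] (F S : Lp ℂ 2 μ) →
      (∫ ξ, ‖((1 + γ ξ ^ 2 * Real.exp (c * γ ξ ^ 2) : ℝ) : ℂ) *
        (F T₀ : Lp ℂ 2 μ) ξ‖ ^ 2 ∂μ) ^ (1/2 : ℝ) = ‖S‖) := by
  set w : X → ℂ := fun ξ => ((1 + γ ξ ^ 2 * Real.exp (c * γ ξ ^ 2) : ℝ) : ℂ)
  have hw_meas : AEStronglyMeasurable w μ := by fun_prop
  have hw : ∀ᵐ ξ ∂μ, 1 ≤ ‖w ξ‖ := .of_forall fun ξ => by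
    simp only [w, Complex.norm_real, Real.norm_eq_abs]
    exact (one_le_one_add_sq_mul_exp (γ ξ) c).trans (le_abs_self _)
  have equation_iff (u : Lp ℂ 2 μ) :
      (fun ξ => -(w ξ * u ξ)) =ᵐ[μ] F S ↔ (fun ξ => w ξ * u ξ) =ᵐ[μ] ⇑(-F S) := by
    constructor <;> intro h <;> filter_upwards [h, Lp.coeFn_neg (F S)] with ξ h₁ h₂
    · rw [h₂, Pi.neg_apply, ← h₁, neg_neg]
    · rw [h₁, h₂, Pi.neg_apply, neg_neg]
  obtain ⟨u, hu, hu_unique⟩ := Lp.existsUnique_mul_ae_eq hw_meas one_pos hw (-F S)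
  refine ⟨⟨F.symm u, ?_, fun T hT => F.eq_symm_apply.2 (hu_unique _ ((equation_iff _).1 hT.2))⟩,
    fun T _ hT => ?_⟩
  · simp only [LinearIsometryEquiv.apply_symm_apply]
    exact ⟨(Lp.memLp _).ae_eq hu.symm, (equation_iff u).2 hu⟩
  · rw [← F.norm_map S, Lp.norm_eq_integral_norm_sq_rpow]
    congr 1
    refine integral_congr_ae ?_
    filter_upwards [hT] with ξ hξ
    rw [← norm_neg, hξ]

/-- The quantum generalized bosonic string equation `𝓛_c T = S`,
where `𝓛_c T = -𝓕⁻¹(w_c 𝓕T)` with weight `w_c(ξ) = 1 + γ(ξ)² e^{cγ(ξ)²}` and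
domain `D(𝓛_c) = {T : w_c 𝓕T ∈ L²}`, has, for every `S ∈ E`, a unique solution
`T₀ ∈ D(𝓛_c)` (expressed here by `w_c 𝓕T₀ = -𝓕S` a.e.), and every solution
satisfies `‖w_c 𝓕T₀‖_{L²} = ‖S‖_E`. -/
theorem quantum_bosonic_string_equation_unique_solution
    {X : Type*} [MeasurableSpace X] (μ : Measure X)
    (γ : X → ℝ) (hγ_meas : Measurable γ) (hγ_pos : ∀ x, 0 < γ x)
    (c : ℝ) (hc : 0 < c)
    {E : Type*} [NormedAddCommGroup E] [InnerProductSpace ℂ E] [CompleteSpace E]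
    (F : E ≃ₗᵢ[ℂ] Lp ℂ 2 μ)
    (S : E) :
    (∃! T₀ : E,
      MemLp (fun ξ => ((1 + γ ξ ^ 2 * Real.exp (c * γ ξ ^ 2) : ℝ) : ℂ) *
        (F T₀ : Lp ℂ 2 μ) ξ) 2 μ ∧
      (fun ξ => -(((1 + γ ξ ^ 2 * Real.exp (c * γ ξ ^ 2) : ℝ) : ℂ) *
        (F T₀ : Lp ℂ 2 μ) ξ)) =ᵐ[μ] (F S : Lp ℂ 2 μ)) ∧
    (∀ T₀ : E,
      MemLp (fun ξ => ((1 + γ ξ ^ 2 * Real.exp (c * γ ξ ^ 2) : ℝ) : ℂ) *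
        (F T₀ : Lp ℂ 2 μ) ξ) 2 μ →
      (fun ξ => -(((1 + γ ξ ^ 2 * Real.exp (c * γ ξ ^ 2) : ℝ) : ℂ) *
        (F T₀ : Lp ℂ 2 μ) ξ)) =ᵐ[μ] (F S : Lp ℂ 2 μ) →
      (∫ ξ, ‖((1 + γ ξ ^ 2 * Real.exp (c * γ ξ ^ 2) : ℝ) : ℂ) *
        (F T₀ : Lp ℂ 2 μ) ξ‖ ^ 2 ∂μ) ^ (1/2 : ℝ) = ‖S‖) :=
  quantum_bosonic_string_equation_unique_solution_general μ γ hγ_meas c F S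
end
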